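/- arXiv:math/0005051 — 2 statements merged into one kernel-verified Lean document; each statement's English description precedes it below -/
import Mathlib

section
/- Let a : U → ℝ be a smooth function on an open set U ⊆ ℝ² and let K be a real constant. The two-component diagonal conformally Euclidean contravariant metric g^{ij}(u) = exp(a(u))δ^{ij} has constant Riemannian curvature K if and only if a satisfies the Liouville equation ∂²a/∂(u¹)² + ∂²a/∂(u²)² = 2K e^{−a(u)} on U. -/
open Matrix

/-- Partial derivative of a scalar function on `ℝ^N` in the `s`-th coordinate direction. -/
noncomputable def pdv {N : ℕ} (f : (Fin N → ℝ) → ℝ) (s : Fin N) (u : Fin N → ℝ) : ℝ :=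
  fderiv ℝ f u (Pi.single s 1)

/-- Levi-Civita Christoffel symbols `Γ^i_{jk}` of a contravariant metric `g^{ij}`
(whose covariant form is the inverse matrix). -/
noncomputable def christoffel {N : ℕ} (g : (Fin N → ℝ) → Matrix (Fin N) (Fin N) ℝ)
    (i j k : Fin N) (u : Fin N → ℝ) : ℝ :=
  (1 / 2) * ∑ s : Fin N, g u i s *
    (pdv (fun v => (g v)⁻¹ s k) j u + pdv (fun v => (g v)⁻¹ j s) k u
      - pdv (fun v => (g v)⁻¹ j k) s u)

/-- Contravariant Christoffel symbols `Γ^{ij}_k = g^{is} Γ^j_{sk}`. -/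
noncomputable def christoffelCon {N : ℕ} (g : (Fin N → ℝ) → Matrix (Fin N) (Fin N) ℝ)
    (i j k : Fin N) (u : Fin N → ℝ) : ℝ :=
  ∑ s : Fin N, g u i s * christoffel g j s k u

/-- Riemann curvature tensor
`R^i_{jkl} = −∂Γ^i_{jl}/∂u^k + ∂Γ^i_{jk}/∂u^l − Γ^i_{pk}Γ^p_{jl} + Γ^i_{pl}Γ^p_{jk}`. -/
noncomputable def riemann {N : ℕ} (g : (Fin N → ℝ) → Matrix (Fin N) (Fin N) ℝ)
    (i j k l : Fin N) (u : Fin N → ℝ) : ℝ :=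
  - pdv (fun v => christoffel g i j l v) k u + pdv (fun v => christoffel g i j k v) l u
    - ∑ p : Fin N, christoffel g i p k u * christoffel g p j l u
    + ∑ p : Fin N, christoffel g i p l u * christoffel g p j k u

/-- Curvature with raised index: `R^{ij}_{kl} = g^{is} R^j_{skl}`. -/
noncomputable def riemannCon {N : ℕ} (g : (Fin N → ℝ) → Matrix (Fin N) (Fin N) ℝ)
    (i j k l : Fin N) (u : Fin N → ℝ) : ℝ :=
  ∑ s : Fin N, g u i s * riemann g j s k l u

/-- A contravariant (pseudo-Riemannian) metric on `U`: smooth, symmetric, nondegenerate. -/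
def IsMetricOn {N : ℕ} (U : Set (Fin N → ℝ))
    (g : (Fin N → ℝ) → Matrix (Fin N) (Fin N) ℝ) : Prop :=
  (∀ i j, ContDiffOn ℝ (⊤ : ℕ∞) (fun u => g u i j) U) ∧
  (∀ u ∈ U, (g u).IsSymm) ∧ (∀ u ∈ U, (g u).det ≠ 0)

/-- Almost compatibility: each admissible linear combination has Levi-Civita
connection given by the same linear combination. -/
def AlmostCompatibleOn {N : ℕ} (U : Set (Fin N → ℝ))
    (g₁ g₂ : (Fin N → ℝ) → Matrix (Fin N) (Fin N) ℝ) : Prop :=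
  ∀ l₁ l₂ : ℝ, (∃ u ∈ U, (l₁ • g₁ u + l₂ • g₂ u).det ≠ 0) →
    ∀ u ∈ U, (l₁ • g₁ u + l₂ • g₂ u).det ≠ 0 →
      ∀ i j k, christoffelCon (fun v => l₁ • g₁ v + l₂ • g₂ v) i j k u
        = l₁ * christoffelCon g₁ i j k u + l₂ * christoffelCon g₂ i j k u

/-- Compatibility: almost compatibility together with the analogous linear relation
for the curvature tensors. -/
def CompatibleOn {N : ℕ} (U : Set (Fin N → ℝ))
    (g₁ g₂ : (Fin N → ℝ) → Matrix (Fin N) (Fin N) ℝ) : Prop :=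
  AlmostCompatibleOn U g₁ g₂ ∧
  ∀ l₁ l₂ : ℝ, (∃ u ∈ U, (l₁ • g₁ u + l₂ • g₂ u).det ≠ 0) →
    ∀ u ∈ U, (l₁ • g₁ u + l₂ • g₂ u).det ≠ 0 →
      ∀ i j k l, riemannCon (fun v => l₁ • g₁ v + l₂ • g₂ v) i j k l u
        = l₁ * riemannCon g₁ i j k l u + l₂ * riemannCon g₂ i j k l u

/-- The affinor `v^i_j = g₁^{is} g_{2,sj}` of a pair of metrics. -/
noncomputable def affinor {N : ℕ} (g₁ g₂ : (Fin N → ℝ) → Matrix (Fin N) (Fin N) ℝ)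
    (u : Fin N → ℝ) : Matrix (Fin N) (Fin N) ℝ :=
  g₁ u * (g₂ u)⁻¹

/-- The Nijenhuis tensor `N^k_{ij}` of an affinor `w^i_j(u)` (first index up). -/
noncomputable def nijenhuis {N : ℕ} (w : (Fin N → ℝ) → Matrix (Fin N) (Fin N) ℝ)
    (k i j : Fin N) (u : Fin N → ℝ) : ℝ :=
  ∑ s : Fin N, (w u s i * pdv (fun v => w v k j) s u - w u s j * pdv (fun v => w v k i) s u
    + w u k s * pdv (fun v => w v s i) j u - w u k s * pdv (fun v => w v s j) i u)

/-- The tensor `M^{ijk} = g₁^{is}Γ₂^{jk}_s − g₂^{js}Γ₁^{ik}_s − g₁^{js}Γ₂^{ik}_s + g₂^{is}Γ₁^{jk}_s`. -/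
noncomputable def Mtensor {N : ℕ} (g₁ g₂ : (Fin N → ℝ) → Matrix (Fin N) (Fin N) ℝ)
    (i j k : Fin N) (u : Fin N → ℝ) : ℝ :=
  ∑ s : Fin N, (g₁ u i s * christoffelCon g₂ j k s u - g₂ u j s * christoffelCon g₁ i k s u
    - g₁ u j s * christoffelCon g₂ i k s u + g₂ u i s * christoffelCon g₁ j k s u)

/-- A nonsingular pair of metrics: at every point, `det(g₁ − λ g₂) = 0` has `N`
pairwise distinct roots. -/
def NonsingularPairOn {N : ℕ} (U : Set (Fin N → ℝ))
    (g₁ g₂ : (Fin N → ℝ) → Matrix (Fin N) (Fin N) ℝ) : Prop :=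
  ∀ u ∈ U, ∃ lam : Fin N → ℝ, Function.Injective lam ∧
    ∀ m, (g₁ u - lam m • g₂ u).det = 0


set_option maxHeartbeats 1600000 in
/-- the conformally Euclidean metric `g^{ij} = e^{a(u)} δ^{ij}` has
constant Riemannian curvature `K` iff `a` satisfies the Liouville equation
`Δa = 2K e^{−a}`. -/
theorem conformal_metric_constant_curvature_iff_liouville
    (U : Set (Fin 2 → ℝ)) (hU : IsOpen U)
    (a : (Fin 2 → ℝ) → ℝ) (ha : ContDiffOn ℝ (⊤ : ℕ∞) a U) (K : ℝ)
    (g : (Fin 2 → ℝ) → Matrix (Fin 2) (Fin 2) ℝ)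
    (hg : ∀ u, g u = Matrix.diagonal (fun _ => Real.exp (a u))) :
    (∀ u ∈ U, ∀ i j k l : Fin 2, riemannCon g i j k l u
        = K * ((if i = k then (1:ℝ) else 0) * (if j = l then (1:ℝ) else 0)
            - (if i = l then (1:ℝ) else 0) * (if j = k then (1:ℝ) else 0))) ↔
      ∀ u ∈ U, pdv (fun v => pdv a 0 v) 0 u + pdv (fun v => pdv a 1 v) 1 u
        = 2 * K * Real.exp (-(a u)) := by
  classical
  have hd : ∀ u ∈ U, ContDiffAt ℝ (⊤ : ℕ∞) a u := fun u hu => ha.contDiffAt (hU.mem_nhds hu)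
  have hainv : ∀ v, (g v)⁻¹ = Matrix.diagonal (fun _ : Fin 2 => Real.exp (-(a v))) := by
    intro v
    rw [hg v]
    apply Matrix.inv_eq_right_inv
    rw [Matrix.diagonal_mul_diagonal]
    ext i j
    by_cases h : i = j <;>
      simp [Matrix.diagonal_apply, Matrix.one_apply, h, ← Real.exp_add]
  have hpdvexp : ∀ u ∈ U, ∀ j : Fin 2,
      pdv (fun v => Real.exp (-(a v))) j u = -(pdv a j u) * Real.exp (-(a u)) := by
    intro u hu j
    have hda : DifferentiableAt ℝ a u := (hd u hu).differentiableAt (by simp)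
    unfold pdv
    rw [show (fun v => Real.exp (-(a v))) = fun v => Real.exp ((fun w => -(a w)) v) from rfl,
      fderiv_exp (f := fun w => -(a w)) hda.neg, fderiv_fun_neg]
    simp
    ring
  have hkey : ∀ u ∈ U, ∀ s k j : Fin 2,
      pdv (fun v => (g v)⁻¹ s k) j u
        = (if s = k then (1:ℝ) else 0) * (-(pdv a j u) * Real.exp (-(a u))) := by
    intro u hu s k j
    by_cases hsk : s = k
    · simp only [hainv, Matrix.diagonal_apply, if_pos hsk, one_mul]
      exact hpdvexp u hu j
    · simp only [hainv, Matrix.diagonal_apply, if_neg hsk, zero_mul]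
      unfold pdv
      simp
  have hchris : ∀ u ∈ U, ∀ i j k : Fin 2,
      christoffel g i j k u
        = -(1/2) * ((if i = k then (1:ℝ) else 0) * pdv a j u
            + (if i = j then (1:ℝ) else 0) * pdv a k u
            - (if j = k then (1:ℝ) else 0) * pdv a i u) := by
    intro u hu i j k
    unfold christoffel
    rw [Fin.sum_univ_two]
    simp only [hkey u hu]
    simp only [hg, Matrix.diagonal_apply]
    have hE := Real.exp_ne_zero (a u)
    fin_cases i <;> fin_cases j <;> fin_cases k <;>
        simp only [Fin.zero_eta, Fin.mk_one, Fin.isValue, Fin.reduceEq, reduceIte, Real.exp_neg] <;>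
      (try field_simp) <;> (try ring)
  have hAd : ∀ m : Fin 2, ∀ u ∈ U, DifferentiableAt ℝ (fun v => pdv a m v) u := by
    intro m u hu
    have h2 : ContDiffAt ℝ (⊤ : ℕ∞) (fderiv ℝ a) u := (hd u hu).fderiv_right (by simp)
    exact (h2.differentiableAt (by simp)).clm_apply (differentiableAt_const _)
  have hdchris : ∀ u ∈ U, ∀ i j k n : Fin 2,
      pdv (fun v => christoffel g i j k v) n u
        = -(1/2) * ((if i = k then (1:ℝ) else 0) * pdv (fun v => pdv a j v) n u
            + (if i = j then (1:ℝ) else 0) * pdv (fun v => pdv a k v) n u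
            - (if j = k then (1:ℝ) else 0) * pdv (fun v => pdv a i v) n u) := by
    intro u hu i j k n
    have heq : (fun v => christoffel g i j k v) =ᶠ[nhds u]
        (fun v => -(1/2) * ((if i = k then (1:ℝ) else 0) * pdv a j v
            + (if i = j then (1:ℝ) else 0) * pdv a k v
            - (if j = k then (1:ℝ) else 0) * pdv a i v)) := by
      filter_upwards [hU.mem_nhds hu] with v hv using hchris v hv i j k
    have h1 := (hAd j u hu).hasFDerivAt
    have h2 := (hAd k u hu).hasFDerivAt
    have h3 := (hAd i u hu).hasFDerivAt
    have H := ((((h1.const_mul (if i = k then (1:ℝ) else 0)).add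
        (h2.const_mul (if i = j then (1:ℝ) else 0))).sub
        (h3.const_mul (if j = k then (1:ℝ) else 0))).const_mul (-(1/2):ℝ))
    unfold pdv
    have H' := H.fderiv
    simp only [Pi.add_apply, Pi.sub_apply] at H'
    rw [heq.fderiv_eq, H']
    simp only [ContinuousLinearMap.smul_apply, ContinuousLinearMap.add_apply,
      ContinuousLinearMap.sub_apply, smul_eq_mul]
    unfold pdv
    ring
  have hsym : ∀ u ∈ U, pdv (fun v => pdv a 0 v) 1 u = pdv (fun v => pdv a 1 v) 0 u := by
    intro u hu
    have hc : DifferentiableAt ℝ (fderiv ℝ a) u :=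
      ((hd u hu).fderiv_right (m := (⊤ : ℕ∞)) (by simp)).differentiableAt (by simp)
    have key : ∀ m n : Fin 2, pdv (fun v => pdv a m v) n u
        = fderiv ℝ (fderiv ℝ a) u (Pi.single n 1) (Pi.single m 1) := by
      intro m n
      unfold pdv
      rw [fderiv_clm_apply hc (differentiableAt_const _)]
      simp
    rw [key, key, ((hd u hu).isSymmSndFDerivAt (by rw [minSmoothness_of_isRCLikeNormedField]; show ((2 : ℕ∞) : WithTop ℕ∞) ≤ ((⊤ : ℕ∞) : WithTop ℕ∞); exact WithTop.coe_le_coe.mpr le_top)).eq]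
  constructor
  · intro h u hu
    have h1 := h u hu 0 1 0 1
    unfold riemannCon riemann at h1
    simp only [Fin.sum_univ_two] at h1
    simp only [hdchris u hu] at h1
    simp only [hchris u hu] at h1
    simp only [hg, Matrix.diagonal_apply] at h1
    norm_num at h1
    rw [Real.exp_neg]
    have hE := Real.exp_ne_zero (a u)
    field_simp
    linear_combination 2 * h1
  · intro h u hu i j k l
    have hL := h u hu
    have hE := Real.exp_ne_zero (a u)
    have hL' : Real.exp (a u) * (pdv (fun v => pdv a 0 v) 0 u
        + pdv (fun v => pdv a 1 v) 1 u) = 2 * K := by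
      rw [hL, Real.exp_neg]
      field_simp
    have hS := hsym u hu
    unfold riemannCon riemann
    simp only [Fin.sum_univ_two]
    simp only [hdchris u hu]
    simp only [hchris u hu]
    simp only [hg, Matrix.diagonal_apply]
    have h01 : ((0:Fin 2) = 1) = False := by decide
    have h10 : ((1:Fin 2) = 0) = False := by decide
    fin_cases i <;> fin_cases j <;> fin_cases k <;> fin_cases l <;>
        simp only [Fin.zero_eta, Fin.mk_one, Fin.isValue, reduceIte, h01, h10, if_false,
          one_mul, zero_mul, mul_one, mul_zero,
          sub_zero, zero_add, add_zero, zero_sub, mul_neg, neg_neg, neg_zero, sub_self] <;>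
      first
        | linear_combination hL' / 2
        | linear_combination -hL' / 2
        | linear_combination (Real.exp (a u) / 2) * hS
        | linear_combination (-(Real.exp (a u)) / 2) * hS
        | ring
end

section
/- Let N > 1 and let b : U → ℝ be a smooth nonvanishing function on a connected open set U ⊆ ℝ^N. The metrics g₁^{ij}(u) = b(u)δ^{ij} and g₂^{ij}(u) = δ^{ij} are always almost compatible (the Nijenhuis tensor of the affinor v^i_j(u) = g₁^{is}(u)g_{2,sj}(u) vanishes identically); but they are compatible (as real metrics) if and only if the function b is constant. -/
open Matrix

section AuxLemmas
open Filter Topology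
variable {N : ℕ}

lemma pdv_congr {f g : (Fin N → ℝ) → ℝ} {u : Fin N → ℝ} (h : f =ᶠ[nhds u] g) (s : Fin N) :
    pdv f s u = pdv g s u := by
  unfold pdv; rw [h.fderiv_eq]

lemma pdv_const (r : ℝ) (s : Fin N) (u : Fin N → ℝ) : pdv (fun _ => r) s u = 0 := by
  simp [pdv]

lemma scalar_inv (c : ℝ) :
    (c • (1 : Matrix (Fin N) (Fin N) ℝ))⁻¹ = Ring.inverse c • (1 : Matrix (Fin N) (Fin N) ℝ) := by
  rcases eq_or_ne c 0 with h | h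
  · simp [h, Matrix.inv_zero]
  · rw [Ring.inverse_eq_inv]
    apply Matrix.inv_eq_right_inv
    simp [Matrix.smul_mul, Matrix.mul_smul, smul_smul, inv_mul_cancel₀ h]

lemma scalar_inv_apply (c : ℝ) (s k : Fin N) :
    ((c • (1 : Matrix (Fin N) (Fin N) ℝ))⁻¹) s k
      = Ring.inverse c * (if s = k then 1 else 0) := by
  rw [scalar_inv]; simp [Matrix.smul_apply, Matrix.one_apply]

lemma hasFDerivAt_inv_comp {f : (Fin N → ℝ) → ℝ} {u : Fin N → ℝ}
    (hf : DifferentiableAt ℝ f u) (hne : f u ≠ 0) :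
    HasFDerivAt (fun v => (f v)⁻¹) ((-(f u ^ 2)⁻¹) • fderiv ℝ f u) u :=
  (hasDerivAt_inv hne).comp_hasFDerivAt u hf.hasFDerivAt

lemma pdv_inv_comp {f : (Fin N → ℝ) → ℝ} {u : Fin N → ℝ}
    (hf : DifferentiableAt ℝ f u) (hne : f u ≠ 0) (m : Fin N) :
    pdv (fun v => (f v)⁻¹) m u = -(f u ^ 2)⁻¹ * pdv f m u := by
  unfold pdv
  rw [(hasFDerivAt_inv_comp hf hne).fderiv]
  simp

lemma pdv_inv_entry (C : (Fin N → ℝ) → ℝ) (u : Fin N → ℝ)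
    (hC : DifferentiableAt ℝ C u) (hne : C u ≠ 0) (s k m : Fin N) :
    pdv (fun v => ((C v • (1 : Matrix (Fin N) (Fin N) ℝ))⁻¹) s k) m u
      = (if s = k then 1 else 0) * (-(C u ^ 2)⁻¹ * pdv C m u) := by
  have hfun : (fun v => ((C v • (1 : Matrix (Fin N) (Fin N) ℝ))⁻¹) s k)
      = fun v => (C v)⁻¹ * (if s = k then 1 else 0) := by
    funext v; rw [scalar_inv_apply, Ring.inverse_eq_inv]
  rw [hfun]
  by_cases hsk : s = k
  · simp only [if_pos hsk, mul_one, one_mul]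
    rw [pdv_inv_comp hC hne m]
  · simp only [hsk, if_false, mul_zero, pdv_const, zero_mul]

lemma christoffel_scalar (C : (Fin N → ℝ) → ℝ) (u : Fin N → ℝ)
    (hC : DifferentiableAt ℝ C u) (hne : C u ≠ 0) (i j k : Fin N) :
    christoffel (fun v => C v • (1 : Matrix (Fin N) (Fin N) ℝ)) i j k u
      = -(1 / (2 * C u)) *
        ((if i = k then pdv C j u else 0) + (if i = j then pdv C k u else 0)
          - (if j = k then pdv C i u else 0)) := by
  unfold christoffel
  rw [Fintype.sum_eq_single i (fun s hs => by
    simp [Matrix.smul_apply, Matrix.one_apply, Ne.symm hs])]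
  rw [pdv_inv_entry C u hC hne i k j, pdv_inv_entry C u hC hne j i k,
    pdv_inv_entry C u hC hne j k i]
  simp only [Matrix.smul_apply, Matrix.one_apply, if_pos rfl, smul_eq_mul, mul_one]
  simp only [show (j = i) = (i = j) from propext eq_comm]
  by_cases h1 : i = k <;> by_cases h2 : i = j <;> by_cases h3 : j = k
  all_goals first
    | exact absurd (h2.symm.trans h1) h3
    | exact absurd (h1.trans h3.symm) h2
    | exact absurd (h2.trans h3) h1
    | (subst_vars
       simp only [*, if_true, if_false, eq_self_iff_true, if_pos rfl]
       try field_simp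
       try ring)

lemma christoffelCon_scalar (C : (Fin N → ℝ) → ℝ) (u : Fin N → ℝ)
    (hC : DifferentiableAt ℝ C u) (hne : C u ≠ 0) (i j k : Fin N) :
    christoffelCon (fun v => C v • (1 : Matrix (Fin N) (Fin N) ℝ)) i j k u
      = -(1 / 2) *
        ((if j = k then pdv C i u else 0) + (if i = j then pdv C k u else 0)
          - (if i = k then pdv C j u else 0)) := by
  unfold christoffelCon
  rw [Fintype.sum_eq_single i (fun s hs => by
    simp [Matrix.smul_apply, Matrix.one_apply, Ne.symm hs])]
  rw [christoffel_scalar C u hC hne j i k]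
  simp only [Matrix.smul_apply, Matrix.one_apply, if_pos rfl, smul_eq_mul, mul_one,
    show (j = i) = (i = j) from propext eq_comm]
  field_simp
  simp only [if_true]
  ring

lemma christoffel_const_metric (A : Matrix (Fin N) (Fin N) ℝ) (i j k : Fin N) (u : Fin N → ℝ) :
    christoffel (fun _ => A) i j k u = 0 := by
  simp [christoffel, pdv_const]

lemma riemann_const_metric (A : Matrix (Fin N) (Fin N) ℝ) (i j k l : Fin N) (u : Fin N → ℝ) :
    riemann (fun _ => A) i j k l u = 0 := by
  simp [riemann, christoffel_const_metric, pdv_const]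

lemma riemannCon_const_metric (A : Matrix (Fin N) (Fin N) ℝ) (i j k l : Fin N) (u : Fin N → ℝ) :
    riemannCon (fun _ => A) i j k l u = 0 := by
  simp [riemannCon, riemann_const_metric]

lemma christoffelCon_const_metric (A : Matrix (Fin N) (Fin N) ℝ) (i j k : Fin N) (u : Fin N → ℝ) :
    christoffelCon (fun _ => A) i j k u = 0 := by
  simp [christoffelCon, christoffel_const_metric]

lemma riemannCon_locally_const (C : (Fin N → ℝ) → ℝ) (c₀ : ℝ) (u : Fin N → ℝ)
    (hloc : ∀ᶠ v in nhds u, C v = c₀) (i j k l : Fin N) :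
    riemannCon (fun v => C v • (1 : Matrix (Fin N) (Fin N) ℝ)) i j k l u = 0 := by
  obtain ⟨T, hTsub, hTopen, huT⟩ := mem_nhds_iff.mp hloc
  have hchr : ∀ v ∈ T, ∀ i j k : Fin N,
      christoffel (fun w => C w • (1 : Matrix (Fin N) (Fin N) ℝ)) i j k v = 0 := by
    intro v hv i j k
    have hpdv0 : ∀ s t m : Fin N,
        pdv (fun w => ((C w • (1 : Matrix (Fin N) (Fin N) ℝ))⁻¹) s t) m v = 0 := by
      intro s t m
      have hev : (fun w => ((C w • (1 : Matrix (Fin N) (Fin N) ℝ))⁻¹) s t)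
          =ᶠ[nhds v] (fun _ => ((c₀ • (1 : Matrix (Fin N) (Fin N) ℝ))⁻¹) s t) := by
        filter_upwards [hTopen.mem_nhds hv] with w hw
        rw [hTsub hw]
      rw [pdv_congr hev, pdv_const]
    simp [christoffel, hpdv0]
  have hR : ∀ s : Fin N, riemann (fun w => C w • (1 : Matrix (Fin N) (Fin N) ℝ)) j s k l u = 0 := by
    intro s
    have hp : ∀ a b c : Fin N,
        pdv (fun v => christoffel (fun w => C w • (1 : Matrix (Fin N) (Fin N) ℝ)) a b c v) k u = 0
        ∧ pdv (fun v => christoffel (fun w => C w • (1 : Matrix (Fin N) (Fin N) ℝ)) a b c v) l u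
          = 0 := by
      intro a b c
      have hev : (fun v => christoffel (fun w => C w • (1 : Matrix (Fin N) (Fin N) ℝ)) a b c v)
          =ᶠ[nhds u] (fun _ => (0 : ℝ)) := by
        filter_upwards [hTopen.mem_nhds huT] with w hw
        exact hchr w hw a b c
      exact ⟨by rw [pdv_congr hev, pdv_const], by rw [pdv_congr hev, pdv_const]⟩
    simp [riemann, (hp _ _ _).1, (hp _ _ _).2, hchr u huT]
  simp [riemannCon, hR]

lemma pdv_neg (f : (Fin N → ℝ) → ℝ) (s : Fin N) (u : Fin N → ℝ) :
    pdv (fun v => -(f v)) s u = -(pdv f s u) := by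
  unfold pdv; rw [fderiv_fun_neg]; simp

lemma pdv_quot (C : (Fin N → ℝ) → ℝ) (u : Fin N → ℝ) (m m' : Fin N)
    (hd : DifferentiableAt ℝ C u)
    (hSm : DifferentiableAt ℝ (fun v => pdv C m v) u) (hne : C u ≠ 0) :
    pdv (fun v => (2 * C v)⁻¹ * pdv C m v) m' u
      = (2 * C u)⁻¹ * pdv (fun v => pdv C m v) m' u
        - pdv C m u * (2 * pdv C m' u) / (2 * C u) ^ 2 := by
  have hne2 : (2 : ℝ) * C u ≠ 0 := mul_ne_zero two_ne_zero hne
  have h1 : HasFDerivAt (fun v => (2 * C v)⁻¹)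
      ((-(((2 : ℝ) * C u) ^ 2)⁻¹) • fderiv ℝ (fun v => 2 * C v) u) u :=
    hasFDerivAt_inv_comp (hd.const_mul 2) hne2
  have h2 : HasFDerivAt (fun v => pdv C m v) (fderiv ℝ (fun v => pdv C m v) u) u :=
    hSm.hasFDerivAt
  have h3 := h1.mul h2
  have h4 : fderiv ℝ (fun v => 2 * C v) u = (2:ℝ) • fderiv ℝ C u := fderiv_const_mul hd 2
  rw [h4] at h3
  rw [show pdv (fun v => (2 * C v)⁻¹ * pdv C m v) m' u
      = fderiv ℝ (fun v => (2 * C v)⁻¹ * pdv C m v) u (Pi.single m' 1) from rfl]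
  rw [(show HasFDerivAt (fun v => (2 * C v)⁻¹ * pdv C m v) _ u from h3).fderiv]
  simp only [ContinuousLinearMap.add_apply, ContinuousLinearMap.smul_apply, smul_eq_mul,
    ContinuousLinearMap.neg_apply]
  rw [show pdv (fun v => pdv C m v) m' u
      = fderiv ℝ (fun v => pdv C m v) u (Pi.single m' 1) from rfl,
    show pdv C m' u = fderiv ℝ C u (Pi.single m' 1) from rfl]
  field_simp
  ring

lemma riemannCon_scalar (C : (Fin N → ℝ) → ℝ) (u : Fin N → ℝ)
    (hC : ∀ᶠ v in nhds u, ContDiffAt ℝ (⊤ : ℕ∞) C v) (hne : C u ≠ 0)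
    (a e : Fin N) (hae : a ≠ e) :
    riemannCon (fun v => C v • (1 : Matrix (Fin N) (Fin N) ℝ)) a e a e u
      = (1 / 2) * (pdv (fun v => pdv C a v) a u + pdv (fun v => pdv C e v) e u)
        - (1 / 2) * ((pdv C a u) ^ 2 + (pdv C e u) ^ 2) / C u
        + (1 / 4) * ((pdv C a u) ^ 2 + (pdv C e u) ^ 2 - ∑ p : Fin N, (pdv C p u) ^ 2) / C u := by
  have hCu : ContDiffAt ℝ (⊤ : ℕ∞) C u := hC.self_of_nhds
  have hd : DifferentiableAt ℝ C u := hCu.differentiableAt (by simp)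
  have hevne : ∀ᶠ v in nhds u, C v ≠ 0 := hd.continuousAt.eventually_ne hne
  have hevd : ∀ᶠ v in nhds u, DifferentiableAt ℝ C v :=
    hC.mono fun v hv => hv.differentiableAt (by simp)
  have hfd : ContDiffAt ℝ (⊤ : ℕ∞) (fderiv ℝ C) u := hCu.fderiv_right (by simp)
  have hSdiff : ∀ m : Fin N, DifferentiableAt ℝ (fun v => pdv C m v) u := fun m =>
    (hfd.differentiableAt (by simp)).clm_apply (differentiableAt_const _)
  -- the two quadratic sums
  have hsum1 : ∑ p : Fin N,
      christoffel (fun v => C v • (1 : Matrix (Fin N) (Fin N) ℝ)) e p a u *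
        christoffel (fun v => C v • (1 : Matrix (Fin N) (Fin N) ℝ)) p a e u
      = ((pdv C a u) ^ 2 - (pdv C e u) ^ 2) / (4 * C u ^ 2) := by
    have h1 : ∀ p : Fin N,
        christoffel (fun v => C v • (1 : Matrix (Fin N) (Fin N) ℝ)) e p a u *
          christoffel (fun v => C v • (1 : Matrix (Fin N) (Fin N) ℝ)) p a e u
        = (if p = e then (pdv C a u) ^ 2 / (4 * C u ^ 2) else 0)
          + (if p = a then -((pdv C e u) ^ 2) / (4 * C u ^ 2) else 0) := by
      intro p
      rw [christoffel_scalar C u hd hne e p a, christoffel_scalar C u hd hne p a e]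
      simp only [show (e = p) = (p = e) from propext eq_comm]
      by_cases h1 : p = e <;> by_cases h2 : p = a
      · exact absurd (h1.symm.trans h2) (Ne.symm hae)
      all_goals
        simp only [h1, h2, hae, Ne.symm hae, if_true, if_false, eq_self_iff_true, if_pos rfl,
          sub_zero, add_zero, zero_add]
        try field_simp
        try ring
    rw [Finset.sum_congr rfl fun p _ => h1 p]
    rw [Finset.sum_add_distrib]
    simp only [Finset.sum_ite_eq', Finset.mem_univ, if_true]
    field_simp
    ring
  have hsum2 : ∑ p : Fin N,
      christoffel (fun v => C v • (1 : Matrix (Fin N) (Fin N) ℝ)) e p e u *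
        christoffel (fun v => C v • (1 : Matrix (Fin N) (Fin N) ℝ)) p a a u
      = (2 * (pdv C a u) ^ 2 - ∑ p : Fin N, (pdv C p u) ^ 2) / (4 * C u ^ 2) := by
    have h1 : ∀ p : Fin N,
        christoffel (fun v => C v • (1 : Matrix (Fin N) (Fin N) ℝ)) e p e u *
          christoffel (fun v => C v • (1 : Matrix (Fin N) (Fin N) ℝ)) p a a u
        = (if p = a then 2 * (pdv C a u) ^ 2 / (4 * C u ^ 2) else 0)
          - (pdv C p u) ^ 2 / (4 * C u ^ 2) := by
      intro p
      rw [christoffel_scalar C u hd hne e p e, christoffel_scalar C u hd hne p a a]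
      simp only [show (e = p) = (p = e) from propext eq_comm]
      by_cases h2 : p = a <;> by_cases h3 : p = e
      · exact absurd (h2.symm.trans h3) hae
      all_goals
        simp only [h2, h3, hae, Ne.symm hae, if_true, if_false, eq_self_iff_true, if_pos rfl,
          sub_zero, add_zero, zero_add]
        try field_simp
        try ring
    rw [Finset.sum_congr rfl fun p _ => h1 p]
    rw [Finset.sum_sub_distrib]
    simp only [Finset.sum_ite_eq', Finset.mem_univ, if_true]
    rw [← Finset.sum_div]
    field_simp
  -- the two derivative terms
  have hGae : (fun v => christoffel (fun w => C w • (1 : Matrix (Fin N) (Fin N) ℝ)) e a e v)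
      =ᶠ[nhds u] (fun v => -((2 * C v)⁻¹ * pdv C a v)) := by
    filter_upwards [hevd, hevne] with v hv1 hv2
    rw [christoffel_scalar C v hv1 hv2 e a e]
    simp only [if_pos rfl, if_neg (Ne.symm hae), if_neg hae, add_zero, sub_zero, if_true]
    rw [one_div, mul_inv]
    ring
  have hGaa : (fun v => christoffel (fun w => C w • (1 : Matrix (Fin N) (Fin N) ℝ)) e a a v)
      =ᶠ[nhds u] (fun v => (2 * C v)⁻¹ * pdv C e v) := by
    filter_upwards [hevd, hevne] with v hv1 hv2
    rw [christoffel_scalar C v hv1 hv2 e a a]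
    simp only [if_pos rfl, if_neg (Ne.symm hae), if_neg hae, add_zero, zero_add, zero_sub,
      if_true]
    rw [one_div, mul_inv]
    ring
  have hp1 : pdv (fun v => christoffel (fun w => C w • (1 : Matrix (Fin N) (Fin N) ℝ)) e a e v) a u
      = -((2 * C u)⁻¹ * pdv (fun v => pdv C a v) a u
          - pdv C a u * (2 * pdv C a u) / (2 * C u) ^ 2) := by
    rw [pdv_congr hGae]
    rw [show (fun v => -((2 * C v)⁻¹ * pdv C a v))
        = (fun v => -((fun w => (2 * C w)⁻¹ * pdv C a w) v)) from rfl]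
    rw [pdv_neg, pdv_quot C u a a hd (hSdiff a) hne]
  have hp2 : pdv (fun v => christoffel (fun w => C w • (1 : Matrix (Fin N) (Fin N) ℝ)) e a a v) e u
      = (2 * C u)⁻¹ * pdv (fun v => pdv C e v) e u
          - pdv C e u * (2 * pdv C e u) / (2 * C u) ^ 2 := by
    rw [pdv_congr hGaa, pdv_quot C u e e hd (hSdiff e) hne]
  -- assemble
  unfold riemannCon
  rw [Fintype.sum_eq_single a (fun s hs => by
    simp [Matrix.smul_apply, Matrix.one_apply, Ne.symm hs])]
  simp only [Matrix.smul_apply, Matrix.one_apply, if_pos rfl, smul_eq_mul, mul_one]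
  unfold riemann
  rw [hp1, hp2, hsum1, hsum2]
  field_simp
  simp only [if_true]
  ring

lemma combo_eq (b : (Fin N → ℝ) → ℝ) (g₁ g₂ : (Fin N → ℝ) → Matrix (Fin N) (Fin N) ℝ)
    (hg₁ : ∀ u, g₁ u = b u • (1 : Matrix (Fin N) (Fin N) ℝ)) (hg₂ : ∀ u, g₂ u = 1)
    (l₁ l₂ : ℝ) :
    (fun v => l₁ • g₁ v + l₂ • g₂ v) = fun v => (l₁ * b v + l₂) • (1 : Matrix (Fin N) (Fin N) ℝ) := by
  funext v
  rw [hg₁, hg₂, smul_smul, ← add_smul]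

lemma det_scalar_ne (hN : 0 < N) (c : ℝ) :
    (c • (1 : Matrix (Fin N) (Fin N) ℝ)).det ≠ 0 ↔ c ≠ 0 := by
  rw [Matrix.det_smul, Matrix.det_one, mul_one, Fintype.card_fin]
  constructor
  · intro h hc; exact h (by rw [hc, zero_pow hN.ne'])
  · intro h; exact pow_ne_zero _ h

end AuxLemmas

/-- for `N > 1` and a nonvanishing smooth `b` on a connected open set,
the metrics `g₁ = b δ` and `g₂ = δ` are always almost compatible (vanishing Nijenhuis
tensor), but they are compatible (as real metrics) iff `b` is constant. -/
theorem conformal_almost_compatible_compatible_iff_constant {N : ℕ} (hN : 1 < N)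
    (U : Set (Fin N → ℝ)) (hU : IsOpen U) (hconn : IsConnected U)
    (b : (Fin N → ℝ) → ℝ) (hb : ContDiffOn ℝ (⊤ : ℕ∞) b U) (hbne : ∀ u ∈ U, b u ≠ 0)
    (g₁ g₂ : (Fin N → ℝ) → Matrix (Fin N) (Fin N) ℝ)
    (hg₁ : ∀ u, g₁ u = b u • (1 : Matrix (Fin N) (Fin N) ℝ))
    (hg₂ : ∀ u, g₂ u = 1) :
    AlmostCompatibleOn U g₁ g₂ ∧
    (∀ u ∈ U, ∀ k i j, nijenhuis (affinor g₁ g₂) k i j u = 0) ∧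
    (CompatibleOn U g₁ g₂ ↔ ∀ u ∈ U, ∀ v ∈ U, b u = b v) := by
  have hg1f : g₁ = fun v => b v • (1 : Matrix (Fin N) (Fin N) ℝ) := funext hg₁
  have hg2f : g₂ = fun _ => (1 : Matrix (Fin N) (Fin N) ℝ) := funext hg₂
  have hNpos : 0 < N := by omega
  have hdb : ∀ u ∈ U, DifferentiableAt ℝ b u := fun u hu =>
    (hb.contDiffAt (hU.mem_nhds hu)).differentiableAt (by simp)
  -- Part 1: almost compatibility
  have halmost : AlmostCompatibleOn U g₁ g₂ := by
    intro l₁ l₂ _hex u hu hdet i j k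
    rw [hg₁, hg₂, smul_smul, ← add_smul] at hdet
    rw [combo_eq b g₁ g₂ hg₁ hg₂ l₁ l₂]
    have hCne : l₁ * b u + l₂ ≠ 0 := (det_scalar_ne hNpos _).mp hdet
    have hdC : DifferentiableAt ℝ (fun v => l₁ * b v + l₂) u :=
      ((hdb u hu).const_mul l₁).add_const l₂
    have hpC : ∀ m, pdv (fun v => l₁ * b v + l₂) m u = l₁ * pdv b m u := by
      intro m
      unfold pdv
      rw [fderiv_add_const, fderiv_const_mul (hdb u hu)]
      simp
    rw [christoffelCon_scalar (fun v => l₁ * b v + l₂) u hdC hCne i j k]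
    rw [hg1f, christoffelCon_scalar b u (hdb u hu) (hbne u hu) i j k]
    have hcc2 : christoffelCon g₂ i j k u = 0 := by
      rw [hg2f]; exact christoffelCon_const_metric 1 i j k u
    rw [hcc2]
    simp only [hpC, show ∀ (P : Prop) (inst : Decidable P) (x : ℝ),
        (if P then l₁ * x else 0) = l₁ * (if P then x else 0) from
      fun P inst x => by split_ifs <;> simp]
    ring
  refine ⟨halmost, ?_, ?_⟩
  · -- Part 2: Nijenhuis tensor vanishes
    intro u hu k i j
    have haff : affinor g₁ g₂ = fun v => b v • (1 : Matrix (Fin N) (Fin N) ℝ) := by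
      funext v
      rw [affinor, hg₁, hg₂, inv_one, Matrix.mul_one]
    rw [haff]
    have hpdv : ∀ (r s m : Fin N),
        pdv (fun v => (b v • (1 : Matrix (Fin N) (Fin N) ℝ)) r s) m u
          = if r = s then pdv b m u else 0 := by
      intro r s m
      by_cases h : r = s
      · simp only [h, Matrix.smul_apply, Matrix.one_apply, if_pos rfl, smul_eq_mul, mul_one,
          if_true]
      · simp only [Matrix.smul_apply, Matrix.one_apply, if_neg h, smul_eq_mul, mul_zero]
        exact pdv_const 0 m u
    unfold nijenhuis
    simp only [hpdv]
    simp only [Matrix.smul_apply, Matrix.one_apply, smul_eq_mul]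
    have hkey : ∀ s : Fin N,
        (b u * if s = i then (1:ℝ) else 0) * (if k = j then pdv b s u else 0)
          - (b u * if s = j then (1:ℝ) else 0) * (if k = i then pdv b s u else 0)
          + (b u * if k = s then (1:ℝ) else 0) * (if s = i then pdv b j u else 0)
          - (b u * if k = s then (1:ℝ) else 0) * (if s = j then pdv b i u else 0)
        = (if s = i then (if k = j then b u * pdv b i u else 0) else 0)
          - (if s = j then (if k = i then b u * pdv b j u else 0) else 0)
          + (if s = k then (if k = i then b u * pdv b j u else 0) else 0)
          - (if s = k then (if k = j then b u * pdv b i u else 0) else 0) := by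
      intro s
      by_cases h1 : s = i <;> by_cases h2 : s = j <;> by_cases h3 : s = k <;>
        by_cases h4 : k = j <;> by_cases h5 : k = i <;> subst_vars <;> simp_all <;> try ring
    rw [Finset.sum_congr rfl (fun s _ => hkey s)]
    simp only [Finset.sum_sub_distrib, Finset.sum_add_distrib, Finset.sum_ite_eq',
      Finset.mem_univ, if_true]
    ring
  · constructor
    · -- compatible → b constant on U
      rintro ⟨-, hcurv⟩ u hu v hv
      -- Step 1: the gradient of b vanishes on U
      have hgrad : ∀ x ∈ U, ∀ m : Fin N, pdv b m x = 0 := by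
        intro x hx m
        set a : Fin N := ⟨0, by omega⟩ with ha
        set e : Fin N := ⟨1, hN⟩ with he
        have hae : a ≠ e := by simp [ha, he, Fin.ext_iff]
        set lam : ℝ := |b x| + 1 with hlam
        have hc0 : b x ≠ 0 := hbne x hx
        have hlampos : (0:ℝ) < lam := by positivity
        have hc1 : b x + lam ≠ 0 := by
          have h1 := neg_abs_le (b x)
          have : (0:ℝ) < b x + lam := by rw [hlam]; linarith
          exact this.ne'
        have hdet1 : ((1:ℝ) • g₁ x + lam • g₂ x).det ≠ 0 := by
          rw [hg₁, hg₂, smul_smul, ← add_smul]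
          exact (det_scalar_ne hNpos _).mpr (by rw [one_mul]; exact hc1)
        have hdet0 : ((1:ℝ) • g₁ x + (0:ℝ) • g₂ x).det ≠ 0 := by
          rw [hg₁, hg₂, smul_smul, ← add_smul]
          exact (det_scalar_ne hNpos _).mpr (by rw [one_mul, add_zero]; exact hc0)
        have H1 := hcurv 1 lam ⟨x, hx, hdet1⟩ x hx hdet1 a e a e
        have H0 := hcurv 1 0 ⟨x, hx, hdet0⟩ x hx hdet0 a e a e
        rw [combo_eq b g₁ g₂ hg₁ hg₂ 1 lam] at H1
        rw [combo_eq b g₁ g₂ hg₁ hg₂ 1 0] at H0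
        have hr2 : riemannCon g₂ a e a e x = 0 := by
          rw [hg2f]; exact riemannCon_const_metric 1 a e a e x
        rw [hr2] at H1 H0
        -- rewrite both sides with the scalar curvature formula
        have hCev : ∀ l₂ : ℝ, ∀ᶠ w in nhds x, ContDiffAt ℝ (⊤ : ℕ∞) (fun v => 1 * b v + l₂) w := by
          intro l₂
          filter_upwards [hU.mem_nhds hx] with w hw
          exact (contDiffAt_const.mul (hb.contDiffAt (hU.mem_nhds hw))).add contDiffAt_const
        have hne1 : (fun v => 1 * b v + lam) x ≠ 0 := by simpa using hc1
        have hne0 : (fun v => 1 * b v + (0:ℝ)) x ≠ 0 := by simpa using hc0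
        rw [riemannCon_scalar _ x (hCev lam) hne1 a e hae] at H1
        rw [riemannCon_scalar _ x (hCev 0) hne0 a e hae] at H0
        -- convert derivatives of the shifted function to derivatives of b
        have hpdvC : ∀ (m : Fin N) (w : Fin N → ℝ),
            pdv (fun v => b v + lam) m w = pdv b m w := by
          intro m w
          unfold pdv
          rw [fderiv_add_const]
        have hpdv2 : ∀ m m' : Fin N,
            pdv (fun w => pdv (fun v => b v + lam) m w) m' x
              = pdv (fun w => pdv b m w) m' x := by
          intro m m'
          rw [show (fun w => pdv (fun v => b v + lam) m w) = fun w => pdv b m w from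
            funext fun w => hpdvC m w]
        simp only [one_mul, add_zero] at H1 H0
        simp only [hpdvC, hpdv2] at H1
        -- now pure algebra
        set Pa := pdv b a x with hPa
        set Pe := pdv b e x with hPe
        set Sig := ∑ p : Fin N, (pdv b p x) ^ 2 with hSig
        set Sa := pdv (fun w => pdv b a w) a x with hSa
        set Se := pdv (fun w => pdv b e w) e x with hSe
        clear_value Pa Pe Sig Sa Se
        have hEQ : (1/2) * (Sa + Se) - (1/2) * (Pa^2 + Pe^2) / (b x + lam)
              + (1/4) * (Pa^2 + Pe^2 - Sig) / (b x + lam)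
            = (1/2) * (Sa + Se) - (1/2) * (Pa^2 + Pe^2) / (b x)
              + (1/4) * (Pa^2 + Pe^2 - Sig) / (b x) := by
          rw [H1, H0]; ring
        have hX : (-(1/2) * (Pa^2 + Pe^2) + (1/4) * (Pa^2 + Pe^2 - Sig)) / (b x + lam)
            = (-(1/2) * (Pa^2 + Pe^2) + (1/4) * (Pa^2 + Pe^2 - Sig)) / (b x) := by
          linear_combination hEQ
        rw [div_eq_div_iff hc1 hc0] at hX
        have hX2 : (-(1/2) * (Pa^2 + Pe^2) + (1/4) * (Pa^2 + Pe^2 - Sig)) * lam = 0 := by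
          linear_combination -hX
        have hX3 : -(1/2) * (Pa^2 + Pe^2) + (1/4) * (Pa^2 + Pe^2 - Sig) = 0 :=
          (mul_eq_zero.mp hX2).resolve_right hlampos.ne'
        have hKS : Pa^2 + Pe^2 + Sig = 0 := by linear_combination (-4 : ℝ) * hX3
        have hSignn : (0:ℝ) ≤ Sig := by
          rw [hSig]; exact Finset.sum_nonneg fun p _ => sq_nonneg _
        have hSig0 : Sig = 0 := by linarith [sq_nonneg Pa, sq_nonneg Pe]
        have hsum0 : ∑ p : Fin N, pdv b p x ^ 2 = 0 := by rw [← hSig]; exact hSig0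
        have h5 := (Finset.sum_eq_zero_iff_of_nonneg
          (fun p _ => sq_nonneg (pdv b p x))).mp hsum0 m (Finset.mem_univ m)
        exact pow_eq_zero_iff two_ne_zero |>.mp h5
      -- Step 2: fderiv of b vanishes on U
      have hfz : ∀ x ∈ U, fderiv ℝ b x = 0 := by
        intro x hx
        apply ContinuousLinearMap.ext
        intro y
        have hy : y = ∑ i : Fin N, y i • (Pi.single i (1:ℝ) : Fin N → ℝ) := by
          funext j
          rw [Finset.sum_apply]
          simp [Pi.single_apply]
        rw [hy, map_sum]
        simp only [_root_.map_smul]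
        have hz : ∀ i : Fin N, fderiv ℝ b x (Pi.single i 1) = 0 := fun i => hgrad x hx i
        simp [hz]
      -- Step 3: b is locally constant, hence constant on the connected set U
      have hloc : ∀ x ∈ U, ∀ᶠ y in nhds x, b y = b x := by
        intro x hx
        obtain ⟨ε, hε, hball⟩ := Metric.isOpen_iff.mp hU x hx
        have hdiff : DifferentiableOn ℝ b (Metric.ball x ε) :=
          (hb.mono hball).differentiableOn (by simp)
        have hzero : ∀ z ∈ Metric.ball x ε, fderivWithin ℝ b (Metric.ball x ε) z = 0 := by
          intro z hz
          rw [fderivWithin_of_isOpen Metric.isOpen_ball hz]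
          exact hfz z (hball hz)
        filter_upwards [Metric.ball_mem_nhds x hε] with y hy
        exact Convex.is_const_of_fderivWithin_eq_zero (convex_ball x ε) hdiff hzero hy
          (Metric.mem_ball_self hε)
      haveI : PreconnectedSpace U := Subtype.preconnectedSpace hconn.isPreconnected
      have hlc : IsLocallyConstant (fun p : U => b p) := by
        rw [IsLocallyConstant.iff_eventually_eq]
        rintro ⟨x, hx⟩
        exact (continuousAt_subtype_val : ContinuousAt (Subtype.val : U → _) ⟨x, hx⟩).eventually (hloc x hx)
      exact hlc.apply_eq_of_preconnectedSpace ⟨u, hu⟩ ⟨v, hv⟩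
    · -- b constant → compatible
      intro hconst
      refine ⟨halmost, ?_⟩
      intro l₁ l₂ _hex u hu _hdet i j k l
      rw [combo_eq b g₁ g₂ hg₁ hg₂ l₁ l₂]
      have hloc : ∀ᶠ v in nhds u, (l₁ * b v + l₂) = (l₁ * b u + l₂) := by
        filter_upwards [hU.mem_nhds hu] with v hv
        rw [hconst v hv u hu]
      rw [riemannCon_locally_const _ _ u hloc i j k l]
      have h1 : riemannCon g₁ i j k l u = 0 := by
        rw [hg1f]
        exact riemannCon_locally_const b (b u) u
          (by filter_upwards [hU.mem_nhds hu] with v hv; exact hconst v hv u hu) i j k l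
      have h2 : riemannCon g₂ i j k l u = 0 := by
        rw [hg2f]; exact riemannCon_const_metric 1 i j k l u
      rw [h1, h2]; ring
end
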